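/- Let H be a complex Hilbert space, {q_j}_{j∈ℕ} a Hilbert (orthonormal) basis of H, S a closed subspace of H, and P : H → H the orthogonal projection onto S. Then for every f ∈ H and every r ∈ ℕ, ‖f − P f‖ ≤ (Σ_{j ≥ r+1} |⟨q_j, f⟩|²)^{1/2} + Σ_{j=0}^{r} |⟨q_j, f⟩| · ‖q_j − P q_j‖. -/

import Mathlib

/-!
`f - P f` is the image of `f` under the projection onto `Sᗮ`, which has norm at most one. Split
`f` into its partial expansion `∑_{j ≤ r} ⟨q_j, f⟩ q_j` and a remainder: by Parseval the remainder
has norm equal to the square root of the tail of the coefficients, and the contraction does not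
increase it, while the triangle inequality bounds the image of the partial expansion term by term.
-/

open scoped InnerProductSpace ComplexInnerProductSpace

namespace HilbertBasis

variable {ι 𝕜 E : Type*} [RCLike 𝕜] [NormedAddCommGroup E] [InnerProductSpace 𝕜 E]

theorem hasSum_norm_inner_sq (b : HilbertBasis ι 𝕜 E) (x : E) :
    HasSum (fun i => ‖⟪b i, x⟫_𝕜‖ ^ 2) (‖x‖ ^ 2) := by
  have h := b.hasSum_inner_mul_inner x x
  simp_rw [inner_self_eq_norm_sq_to_K, ← inner_conj_symm x (b _), RCLike.conj_mul] at h
  exact_mod_cast h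

theorem inner_sub_sum_inner_smul (b : HilbertBasis ι 𝕜 E) (x : E) (s : Finset ι) (i : ι) :
    ⟪b i, x - ∑ j ∈ s, ⟪b j, x⟫_𝕜 • b j⟫_𝕜 = (↑s : Set ι)ᶜ.indicator (fun j => ⟪b j, x⟫_𝕜) i := by
  classical
  by_cases hi : i ∈ s <;>
    simp [hi, inner_sub_right, inner_sum, inner_smul_right, orthonormal_iff_ite.mp b.orthonormal]

theorem norm_sub_sum_inner_smul (b : HilbertBasis ι 𝕜 E) (x : E) (s : Finset ι) :
    ‖x - ∑ i ∈ s, ⟪b i, x⟫_𝕜 • b i‖ = √(∑' i : {i // i ∉ s}, ‖⟪b i, x⟫_𝕜‖ ^ 2) := by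
  have h := (b.hasSum_norm_inner_sq (x - ∑ i ∈ s, ⟪b i, x⟫_𝕜 • b i)).tsum_eq
  simp only [inner_sub_sum_inner_smul, norm_indicator_eq_indicator_norm] at h
  rw [← Real.sqrt_sq (norm_nonneg _), ← h]
  refine congrArg _ ((tsum_subtype (↑s : Set ι)ᶜ fun i => ‖⟪b i, x⟫_𝕜‖ ^ 2).trans
    (tsum_congr fun i => ?_)).symm
  by_cases hi : i ∈ s <;> simp [hi]

theorem norm_apply_le_of_opNorm_le_one {F : Type*} [SeminormedAddCommGroup F] [NormedSpace 𝕜 F]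
    (b : HilbertBasis ι 𝕜 E) (T : E →L[𝕜] F) (hT : ‖T‖ ≤ 1) (x : E) (s : Finset ι) :
    ‖T x‖ ≤ √(∑' i : {i // i ∉ s}, ‖⟪b i, x⟫_𝕜‖ ^ 2) + ∑ i ∈ s, ‖⟪b i, x⟫_𝕜‖ * ‖T (b i)‖ := by
  have hx : T x = T (x - ∑ i ∈ s, ⟪b i, x⟫_𝕜 • b i) + ∑ i ∈ s, ⟪b i, x⟫_𝕜 • T (b i) := by
    simp
  calc ‖T x‖ ≤ ‖T (x - ∑ i ∈ s, ⟪b i, x⟫_𝕜 • b i)‖ + ∑ i ∈ s, ‖⟪b i, x⟫_𝕜 • T (b i)‖ := by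
        rw [hx]; exact norm_add_le_of_le le_rfl (norm_sum_le _ _)
    _ ≤ _ := by
        gcongr
        · rw [← norm_sub_sum_inner_smul]; exact (T.le_of_opNorm_le hT _).trans_eq (one_mul _)
        · rw [norm_smul]

end HilbertBasis

theorem stmt0_general {H : Type*} [NormedAddCommGroup H] [InnerProductSpace ℂ H]
    (q : HilbertBasis ℕ ℂ H) (S : Submodule ℂ H)
    [S.HasOrthogonalProjection] (f : H) (r : ℕ) :
    ‖f - (S.orthogonalProjectionOnto f : H)‖ ≤
      Real.sqrt (∑' j : {j : ℕ // r + 1 ≤ j}, ‖⟪q j.1, f⟫‖ ^ 2) +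
      ∑ j ∈ Finset.range (r + 1),
        ‖⟪q j, f⟫‖ * ‖q j - (S.orthogonalProjectionOnto (q j) : H)‖ := by
  have hQ (x : H) : x - (S.orthogonalProjectionOnto x : H) = Sᗮ.starProjection x := by
    rw [Submodule.starProjection_orthogonal_val, Submodule.starProjection_apply]
  have htail : ∑' j : {j : ℕ // r + 1 ≤ j}, ‖⟪q j.1, f⟫‖ ^ 2 =
      ∑' j : {j : ℕ // j ∉ Finset.range (r + 1)}, ‖⟪q j.1, f⟫‖ ^ 2 :=
    ((Equiv.subtypeEquivRight fun j => by simp).tsum_eq fun j => ‖⟪q j.1, f⟫‖ ^ 2).symm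
  rw [htail]
  simp only [hQ]
  exact q.norm_apply_le_of_opNorm_le_one _ Sᗮ.starProjection_norm_le f _

/-- for a Hilbert basis `q` of a complex Hilbert space `H`, a closed
subspace `S` with orthogonal projection `P`, every `f` and `r` satisfy
`‖f − P f‖ ≤ (Σ_{j ≥ r+1} |⟨q_j, f⟩|²)^{1/2} + Σ_{j=0}^{r} |⟨q_j, f⟩| ‖q_j − P q_j‖`. -/
theorem stmt0 {H : Type*} [NormedAddCommGroup H] [InnerProductSpace ℂ H] [CompleteSpace H]
    (q : HilbertBasis ℕ ℂ H) (S : Submodule ℂ H) (hS : IsClosed (S : Set H))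
    [S.HasOrthogonalProjection] (f : H) (r : ℕ) :
    ‖f - (S.orthogonalProjectionOnto f : H)‖ ≤
      Real.sqrt (∑' j : {j : ℕ // r + 1 ≤ j}, ‖⟪q j.1, f⟫‖ ^ 2) +
      ∑ j ∈ Finset.range (r + 1),
        ‖⟪q j, f⟫‖ * ‖q j - (S.orthogonalProjectionOnto (q j) : H)‖ :=
  stmt0_general q S f r
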